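/- arXiv:2603.20566 — 5 statements merged into one kernel-verified Lean document; each statement's English description precedes it below -/
import Mathlib

section
/- Let 0 < α < 1, β > 0, and let λ be a complex number not lying in the real interval (−∞, −β]. Then the (complex-valued) improper integral ∫_{−∞}^{+∞} |ϑ|^{2α−1} / (λ + β + ϑ²) dϑ converges and equals (π / sin(απ)) · (λ + β)^{α−1}, where (λ+β)^{α−1} denotes the principal branch of the complex power. -/
/-!
Since the integrand only depends on `|ϑ|`, the integral is twice the one over `(0, ∞)`, and
`t = ϑ²` turns that into `½ S(w)` with `S(w) = ∫₀^∞ t^(α-1) / (t + w) dt` and `w = λ + β` in the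
slit plane. For `w = x > 0` the scaling `t ↦ x t` gives `S(x) = x^(α-1) S(1)`, and `t = u / (1 - u)`
identifies `S(1)` with `B(α, 1 - α) = Γ(α) Γ(1 - α) = π / sin(απ)`. Both `S` (by differentiation
under the integral sign, dominated by `t^(α-1) / (1 + t)²`) and `w ↦ π / sin(απ) · w^(α-1)` are
holomorphic on the slit plane, so the identity theorem extends the formula from `(0, ∞)`.
-/

open Real MeasureTheory Set Metric Filter Topology

section Substitutions

variable {E : Type*} [NormedAddCommGroup E]

theorem integrableOn_Ioi_comp_abs_iff {f : ℝ → E} :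
    IntegrableOn (fun x => f |x|) (Ioi 0) ↔ IntegrableOn f (Ioi 0) :=
  integrableOn_congr_fun (fun x hx => by rw [abs_of_pos hx]) measurableSet_Ioi

theorem integrableOn_Iic_comp_abs_iff {f : ℝ → E} :
    IntegrableOn (fun x => f |x|) (Iic 0) ↔ IntegrableOn f (Ioi 0) := by
  rw [← (Measure.measurePreserving_neg volume).integrableOn_comp_preimage
    (Homeomorph.neg ℝ).measurableEmbedding]
  simp only [Function.comp_def, abs_neg, neg_preimage, neg_Iic, neg_zero]
  rw [integrableOn_Ici_iff_integrableOn_Ioi, integrableOn_Ioi_comp_abs_iff]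

theorem integrable_comp_abs_iff {f : ℝ → E} :
    Integrable (fun x => f |x|) ↔ IntegrableOn f (Ioi 0) := by
  rw [← integrableOn_univ, ← Iic_union_Ioi (a := 0), integrableOn_union,
    integrableOn_Iic_comp_abs_iff, integrableOn_Ioi_comp_abs_iff, and_self]

theorem integral_comp_abs_eq_two_smul [NormedSpace ℝ E] {f : ℝ → E} :
    ∫ x, f |x| = (2 : ℝ) • ∫ x in Ioi 0, f x := by
  by_cases hf : IntegrableOn f (Ioi 0)
  · have hIic : ∫ x in Iic 0, f |x| = ∫ x in Ioi 0, f x := by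
      rw [← neg_zero, ← integral_comp_neg_Iic, neg_zero]
      exact setIntegral_congr_fun measurableSet_Iic fun x hx => by rw [abs_of_nonpos hx]
    have hIoi : ∫ x in Ioi 0, f |x| = ∫ x in Ioi 0, f x :=
      setIntegral_congr_fun measurableSet_Ioi fun x hx => by rw [abs_of_pos hx]
    rw [← setIntegral_univ, ← Iic_union_Ioi (a := 0),
      setIntegral_union (Iic_disjoint_Ioi le_rfl) measurableSet_Ioi
        (integrableOn_Iic_comp_abs_iff.2 hf) (integrableOn_Ioi_comp_abs_iff.2 hf),
      hIic, hIoi, two_smul]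
  · rw [integral_undef (mt integrable_comp_abs_iff.1 hf), integral_undef hf, smul_zero]

theorem integrableOn_Ioi_smul_comp_sq_iff [NormedSpace ℝ E] {g : ℝ → E} :
    IntegrableOn (fun x => x • g (x ^ 2)) (Ioi 0) ↔ IntegrableOn g (Ioi 0) := by
  simpa only [show (2 : ℝ) - 1 = 1 by norm_num, Real.rpow_one, Real.rpow_two]
    using integrableOn_Ioi_comp_rpow_iff' g two_ne_zero

theorem integral_Ioi_smul_comp_sq [NormedSpace ℝ E] {g : ℝ → E} :
    ∫ x in Ioi 0, x • g (x ^ 2) = (2 : ℝ)⁻¹ • ∫ x in Ioi 0, g x := by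
  rw [← integral_comp_rpow_Ioi_of_pos (g := g) two_pos, ← integral_smul]
  congr 1 with x
  rw [smul_smul, show (2 : ℝ) - 1 = 1 by norm_num, Real.rpow_one, Real.rpow_two,
    inv_mul_cancel_left₀ two_ne_zero]

theorem integral_Ioi_eq_integral_Ioo_div_one_sub [NormedSpace ℝ E] (g : ℝ → E) :
    ∫ t in Ioi 0, g t = ∫ u in Ioo 0 1, ((1 - u) ^ 2)⁻¹ • g (u / (1 - u)) := by
  have hderiv : ∀ u ∈ Ioo (0 : ℝ) 1,
      HasDerivWithinAt (fun u : ℝ => u / (1 - u)) ((1 - u) ^ 2)⁻¹ (Ioo 0 1) u := by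
    intro u hu
    have h1 : (1 : ℝ) - u ≠ 0 := sub_ne_zero.2 hu.2.ne'
    have hd : HasDerivAt (fun u : ℝ => u / (1 - u)) ((1 * (1 - u) - u * (0 - 1)) / (1 - u) ^ 2) u :=
      (hasDerivAt_id u).div ((hasDerivAt_const u 1).sub (hasDerivAt_id u)) h1
    rw [show (1 * (1 - u) - u * (0 - 1)) / (1 - u) ^ 2 = ((1 - u) ^ 2)⁻¹ by field_simp; ring]
      at hd
    exact hd.hasDerivWithinAt
  have hinj : InjOn (fun u : ℝ => u / (1 - u)) (Ioo 0 1) := by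
    intro u hu v hv h
    have h1 : (1 : ℝ) - u ≠ 0 := sub_ne_zero.2 hu.2.ne'
    have h2 : (1 : ℝ) - v ≠ 0 := sub_ne_zero.2 hv.2.ne'
    field_simp at h
    linarith
  have himage : (fun u : ℝ => u / (1 - u)) '' Ioo 0 1 = Ioi 0 := by
    ext t
    simp only [mem_image, mem_Ioi, mem_Ioo]
    constructor
    · rintro ⟨u, ⟨hu0, hu1⟩, rfl⟩
      exact div_pos hu0 (by linarith)
    · intro ht
      refine ⟨t / (1 + t), ⟨by positivity, (div_lt_one (by linarith)).2 (by linarith)⟩, ?_⟩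
      field_simp
      ring
  rw [← himage, integral_image_eq_integral_abs_deriv_smul measurableSet_Ioo hderiv hinj]
  refine setIntegral_congr_fun measurableSet_Ioo fun u _ => ?_
  rw [abs_of_nonneg (by positivity)]

end Substitutions

theorem integrableOn_Ioi_rpow_div_one_add_rpow {s q : ℝ} (hs : -1 < s) (hq : s + 1 < q) :
    IntegrableOn (fun t : ℝ => t ^ s / (1 + t) ^ q) (Ioi 0) := by
  have hmeas : AEStronglyMeasurable (fun t : ℝ => t ^ s / (1 + t) ^ q) :=
    (by fun_prop : Measurable fun t : ℝ => t ^ s / (1 + t) ^ q).aestronglyMeasurable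
  rw [← Ioc_union_Ioi_eq_Ioi zero_le_one]
  refine IntegrableOn.union ?_ ?_
  · have hdom : IntegrableOn (fun t : ℝ => t ^ s) (Ioc 0 1) := by
      simpa [intervalIntegrable_iff, uIoc_of_le zero_le_one] using
        intervalIntegral.intervalIntegrable_rpow' (a := 0) (b := 1) hs
    refine hdom.mono' hmeas.restrict ((ae_restrict_iff' measurableSet_Ioc).2 ?_)
    refine ae_of_all _ fun t ⟨ht0, _⟩ => ?_
    rw [norm_of_nonneg (by positivity)]
    exact div_le_self (by positivity) (one_le_rpow (by linarith) (by linarith))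
  · have hdom : IntegrableOn (fun t : ℝ => t ^ (s - q)) (Ioi 1) :=
      integrableOn_Ioi_rpow_of_lt (by linarith) one_pos
    refine hdom.mono' hmeas.restrict ((ae_restrict_iff' measurableSet_Ioi).2 ?_)
    refine ae_of_all _ fun t (ht : 1 < t) => ?_
    have ht0 : 0 < t := by linarith
    rw [norm_of_nonneg (by positivity), rpow_sub ht0]
    exact div_le_div_of_nonneg_left (by positivity) (by positivity)
      (rpow_le_rpow ht0.le (by linarith) (by linarith))

theorem Complex.add_ofReal_mem_slitPlane {z : ℂ} {b : ℝ}
    (hz : ∀ x : ℝ, x ≤ -b → (x : ℂ) ≠ z) : z + b ∈ slitPlane := by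
  refine mem_slitPlane_iff_not_le_zero.2 fun hle => ?_
  obtain ⟨hre, him⟩ := le_def.1 hle
  refine hz ((z + b).re - b) (by rw [zero_re] at hre; linarith) (ext ?_ ?_)
  · simp
  · simpa using him.symm

theorem Complex.exists_pos_mul_one_add_le_norm_ofReal_add {w : ℂ} (hw : w ∈ Complex.slitPlane) :
    ∃ c > 0, ∀ t : ℝ, 0 ≤ t → c * (1 + t) ≤ ‖(t : ℂ) + w‖ := by
  have hn : 0 < ‖w‖ := norm_pos_iff.2 (Complex.slitPlane_ne_zero hw)
  have hrn : w.re ≤ ‖w‖ := Complex.re_le_norm w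
  have hr : 0 < ‖w‖ + w.re := by
    rcases hw with hre | him
    · linarith
    · linarith [abs_lt.1 (Complex.abs_re_lt_norm.2 him)]
  -- `k = cos² (arg w / 2)`, and
  -- `2‖w‖ ‖t + w‖² = (‖w‖ + re w) (t + ‖w‖)² + (‖w‖ - re w) (t - ‖w‖)²`
  set k := (‖w‖ + w.re) / (2 * ‖w‖) with hk
  have hk0 : 0 < k := by positivity
  have hk1 : k ≤ 1 := (div_le_one (by positivity)).2 (by linarith)
  refine ⟨k * min 1 ‖w‖, by positivity, fun t ht => ?_⟩
  have hsq : ‖(t : ℂ) + w‖ ^ 2 = (t + w.re) ^ 2 + w.im ^ 2 := by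
    simp only [Complex.sq_norm, normSq_apply, add_re, ofReal_re, add_im, ofReal_im, zero_add]; ring
  have hnsq : ‖w‖ ^ 2 = w.re ^ 2 + w.im ^ 2 := by
    simp only [Complex.sq_norm, normSq_apply]; ring
  have hmain : k * (t + ‖w‖) ^ 2 ≤ ‖(t : ℂ) + w‖ ^ 2 := by
    rw [hk, div_mul_eq_mul_div, div_le_iff₀ (by positivity)]
    nlinarith [mul_nonneg (sub_nonneg.2 hrn) (sq_nonneg (t - ‖w‖))]
  have hlin : k * min 1 ‖w‖ * (1 + t) ≤ k * (t + ‖w‖) := by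
    have := min_le_left 1 ‖w‖
    have := min_le_right 1 ‖w‖
    rw [mul_assoc]; gcongr; nlinarith
  refine hlin.trans ((pow_le_pow_iff_left₀ (by positivity) (norm_nonneg _) two_ne_zero).1 ?_)
  calc (k * (t + ‖w‖)) ^ 2 = k * (k * (t + ‖w‖) ^ 2) := by ring
    _ ≤ 1 * ‖(t : ℂ) + w‖ ^ 2 := by gcongr
    _ = ‖(t : ℂ) + w‖ ^ 2 := one_mul _

theorem Complex.exists_pos_forall_mem_ball_mul_one_add_le_norm_ofReal_add {w : ℂ}
    (hw : w ∈ Complex.slitPlane) :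
    ∃ c > 0, ∀ z ∈ ball w c, ∀ t : ℝ, 0 ≤ t → c * (1 + t) ≤ ‖(t : ℂ) + z‖ := by
  obtain ⟨c, hc, hbound⟩ := Complex.exists_pos_mul_one_add_le_norm_ofReal_add hw
  refine ⟨c / 2, by positivity, fun z hz t ht => ?_⟩
  have hzw : ‖z - w‖ < c / 2 := by rwa [mem_ball, dist_eq_norm] at hz
  have htri : ‖(t : ℂ) + w‖ ≤ ‖(t : ℂ) + z‖ + ‖z - w‖ := by
    rw [show (t : ℂ) + w = (t + z) - (z - w) by ring]
    exact norm_sub_le _ _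
  nlinarith [hbound t ht]

theorem Complex.betaIntegral_one_sub {s : ℂ} (hs0 : 0 < s.re) (hs1 : s.re < 1) :
    Complex.betaIntegral s (1 - s) = π / Complex.sin (π * s) := by
  have h := Complex.Gamma_mul_Gamma_eq_betaIntegral (t := 1 - s) hs0
    (by rw [Complex.sub_re, Complex.one_re]; linarith)
  rwa [add_sub_cancel, Complex.Gamma_one, one_mul, Complex.Gamma_mul_Gamma_one_sub, eq_comm] at h

theorem AnalyticOnNhd.eqOn_slitPlane_of_forall_pos {E : Type*} [NormedAddCommGroup E]
    [NormedSpace ℂ E] {f g : ℂ → E} (hf : AnalyticOnNhd ℂ f Complex.slitPlane)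
    (hg : AnalyticOnNhd ℂ g Complex.slitPlane) (hfg : ∀ x : ℝ, 0 < x → f x = g x) :
    EqOn f g Complex.slitPlane := by
  have hconn : IsPreconnected Complex.slitPlane :=
    (Complex.starConvex_one_slitPlane.isPathConnected
      Complex.one_mem_slitPlane).isConnected.isPreconnected
  have hofReal : Tendsto ((↑) : ℝ → ℂ) (𝓝[≠] 1) (𝓝[≠] 1) :=
    tendsto_nhdsWithin_iff.2 ⟨tendsto_nhdsWithin_of_tendsto_nhds
      Complex.continuous_ofReal.continuousAt, eventually_nhdsWithin_iff.2
        (Eventually.of_forall fun _ hx => Complex.ofReal_ne_one.2 hx)⟩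
  refine hf.eqOn_of_preconnected_of_frequently_eq hg hconn Complex.one_mem_slitPlane
    (hofReal.frequently ?_)
  exact ((eventually_gt_nhds one_pos).filter_mono nhdsWithin_le_nhds).frequently.mono hfg

noncomputable def stieltjesRpow (a : ℝ) (w : ℂ) : ℂ :=
  ∫ t in Ioi (0 : ℝ), ((t ^ (a - 1) : ℝ) : ℂ) / ((t : ℂ) + w)

section StieltjesRpow

variable {a : ℝ}

theorem integrableOn_rpow_div_ofReal_add (ha0 : 0 < a) (ha1 : a < 1) {w : ℂ}
    (hw : w ∈ Complex.slitPlane) :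
    IntegrableOn (fun t : ℝ => ((t ^ (a - 1) : ℝ) : ℂ) / ((t : ℂ) + w)) (Ioi 0) := by
  obtain ⟨c, hc, hbound⟩ := Complex.exists_pos_mul_one_add_le_norm_ofReal_add hw
  have hdom := ((integrableOn_Ioi_rpow_div_one_add_rpow (s := a - 1) (q := 1)
    (by linarith) (by linarith)).const_mul c⁻¹)
  refine hdom.mono' (by fun_prop : Measurable _).aestronglyMeasurable.restrict
    ((ae_restrict_iff' measurableSet_Ioi).2 (ae_of_all _ fun t (ht : 0 < t) => ?_))
  have hpos : 0 < c * (1 + t) := by positivity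
  rw [norm_div, Complex.norm_real, norm_of_nonneg (by positivity), rpow_one,
    ← div_eq_inv_mul, div_div, mul_comm (1 + t)]
  exact div_le_div_of_nonneg_left (by positivity) hpos (hbound t ht.le)

theorem differentiableAt_stieltjesRpow (ha0 : 0 < a) (ha1 : a < 1) {w : ℂ}
    (hw : w ∈ Complex.slitPlane) : DifferentiableAt ℂ (stieltjesRpow a) w := by
  obtain ⟨c, hc, hbound⟩ :=
    Complex.exists_pos_forall_mem_ball_mul_one_add_le_norm_ofReal_add hw
  have hne : ∀ z ∈ ball w c, ∀ t : ℝ, 0 < t → (t : ℂ) + z ≠ 0 := fun z hz t ht h0 => by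
    have := hbound z hz t ht.le
    rw [h0, norm_zero] at this
    nlinarith
  have hdom := ((integrableOn_Ioi_rpow_div_one_add_rpow (s := a - 1) (q := 2)
    (by linarith) (by linarith)).const_mul (c ^ 2)⁻¹)
  refine (hasDerivAt_integral_of_dominated_loc_of_deriv_le (μ := volume.restrict (Ioi 0))
    (F := fun z (t : ℝ) => ((t ^ (a - 1) : ℝ) : ℂ) / ((t : ℂ) + z))
    (F' := fun z (t : ℝ) => -(((t ^ (a - 1) : ℝ) : ℂ) / ((t : ℂ) + z) ^ 2))
    (ball_mem_nhds w hc) ?_ (integrableOn_rpow_div_ofReal_add ha0 ha1 hw)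
    (by fun_prop : Measurable _).aestronglyMeasurable ?_ hdom ?_).2.differentiableAt
  · filter_upwards [Complex.isOpen_slitPlane.mem_nhds hw] with z hz
    exact (integrableOn_rpow_div_ofReal_add ha0 ha1 hz).aestronglyMeasurable
  · refine (ae_restrict_iff' measurableSet_Ioi).2 (ae_of_all _ fun t (ht : 0 < t) z hz => ?_)
    have hpos : 0 < c * (1 + t) := by positivity
    rw [norm_neg, norm_div, norm_pow, Complex.norm_real, norm_of_nonneg (by positivity),
      rpow_two, ← div_eq_inv_mul, div_div, ← mul_pow, mul_comm (1 + t)]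
    exact div_le_div_of_nonneg_left (by positivity) (by positivity)
      (pow_le_pow_left₀ hpos.le (hbound z hz t ht.le) 2)
  · refine (ae_restrict_iff' measurableSet_Ioi).2 (ae_of_all _ fun t (ht : 0 < t) z hz => ?_)
    have hd := ((hasDerivAt_id z).const_add (t : ℂ)).inv (hne z hz t ht)
    simpa [div_eq_mul_inv] using hd.const_mul (((t ^ (a - 1) : ℝ) : ℂ))

theorem stieltjesRpow_ofReal {x : ℝ} (hx : 0 < x) :
    stieltjesRpow a x = (x : ℂ) ^ ((a : ℂ) - 1) * stieltjesRpow a 1 := by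
  have hxC : (x : ℂ) ≠ 0 := by exact_mod_cast hx.ne'
  rw [stieltjesRpow, ← mul_zero x, ← integral_comp_mul_left_Ioi' _ 0 hx, stieltjesRpow,
    Complex.real_smul, ← integral_const_mul, ← integral_const_mul]
  refine setIntegral_congr_fun measurableSet_Ioi fun t (ht : 0 < t) => ?_
  have ht1 : (t : ℂ) + 1 ≠ 0 := by exact_mod_cast (by linarith : t + 1 ≠ 0)
  rw [mul_rpow hx.le ht.le, Complex.ofReal_mul, Complex.ofReal_cpow hx.le]
  push_cast
  rw [show (x : ℂ) * t + x = x * (t + 1) by ring]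
  field_simp

theorem stieltjesRpow_one (ha0 : 0 < a) (ha1 : a < 1) :
    stieltjesRpow a 1 = ((π / Real.sin (a * π) : ℝ) : ℂ) := by
  have hpoint : ∀ u ∈ Ioo (0 : ℝ) 1,
      ((1 - u) ^ 2)⁻¹ • ((((u / (1 - u)) ^ (a - 1) : ℝ) : ℂ) / (((u / (1 - u) : ℝ) : ℂ) + 1))
        = (u : ℂ) ^ ((a : ℂ) - 1) * (1 - (u : ℂ)) ^ ((1 - (a : ℂ)) - 1) := by
    rintro u ⟨hu0, hu1⟩
    have hv : 0 < 1 - u := by linarith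
    have hreal : ((1 - u) ^ 2)⁻¹ * ((u / (1 - u)) ^ (a - 1) / (u / (1 - u) + 1))
        = u ^ (a - 1) * (1 - u) ^ (-a) := by
      rw [div_rpow hu0.le hv.le, rpow_sub_one hv.ne', rpow_neg hv.le]
      field_simp
      ring
    rw [show (1 - (a : ℂ)) - 1 = ((-a : ℝ) : ℂ) by push_cast; ring,
      show (a : ℂ) - 1 = ((a - 1 : ℝ) : ℂ) by push_cast; ring,
      ← Complex.ofReal_cpow hu0.le, show 1 - (u : ℂ) = ((1 - u : ℝ) : ℂ) by push_cast; ring,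
      ← Complex.ofReal_cpow hv.le, ← Complex.ofReal_mul, ← hreal, Complex.real_smul]
    push_cast
    ring
  rw [stieltjesRpow, integral_Ioi_eq_integral_Ioo_div_one_sub,
    setIntegral_congr_fun measurableSet_Ioo hpoint, ← integral_Ioc_eq_integral_Ioo,
    ← intervalIntegral.integral_of_le zero_le_one, ← Complex.betaIntegral,
    Complex.betaIntegral_one_sub (by simpa using ha0) (by simpa using ha1)]
  push_cast
  rw [mul_comm (a : ℂ)]

theorem stieltjesRpow_eq (ha0 : 0 < a) (ha1 : a < 1) {w : ℂ}
    (hw : w ∈ Complex.slitPlane) :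
    stieltjesRpow a w = ((π / Real.sin (a * π) : ℝ) : ℂ) * w ^ ((a : ℂ) - 1) := by
  refine AnalyticOnNhd.eqOn_slitPlane_of_forall_pos (f := stieltjesRpow a)
    (g := fun z => ((π / Real.sin (a * π) : ℝ) : ℂ) * z ^ ((a : ℂ) - 1)) ?_ ?_ ?_ hw
  · exact DifferentiableOn.analyticOnNhd
      (fun z hz => (differentiableAt_stieltjesRpow ha0 ha1 hz).differentiableWithinAt)
      Complex.isOpen_slitPlane
  · exact DifferentiableOn.analyticOnNhd (fun z hz =>
      ((differentiableAt_id.cpow_const hz).const_mul _).differentiableWithinAt)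
      Complex.isOpen_slitPlane
  · intro x hx
    rw [stieltjesRpow_ofReal hx, stieltjesRpow_one ha0 ha1, mul_comm]

end StieltjesRpow

theorem integrable_and_integral_abs_rpow_div_add_sq {α : ℝ} (hα0 : 0 < α) (hα1 : α < 1) {w : ℂ}
    (hw : w ∈ Complex.slitPlane) :
    Integrable (fun ϑ : ℝ => ((|ϑ| ^ (2 * α - 1) : ℝ) : ℂ) / (w + (ϑ : ℂ) ^ 2)) ∧
    ∫ ϑ : ℝ, ((|ϑ| ^ (2 * α - 1) : ℝ) : ℂ) / (w + (ϑ : ℂ) ^ 2)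
      = ((π / Real.sin (α * π) : ℝ) : ℂ) * w ^ ((α : ℂ) - 1) := by
  set k : ℝ → ℂ := fun t => ((t ^ (2 * α - 1) : ℝ) : ℂ) / (w + (t : ℂ) ^ 2)
  have hk_abs : (fun ϑ : ℝ => ((|ϑ| ^ (2 * α - 1) : ℝ) : ℂ) / (w + (ϑ : ℂ) ^ 2))
      = fun ϑ => k |ϑ| := by
    ext ϑ
    simp only [k]
    rw [← Complex.ofReal_pow, ← Complex.ofReal_pow, sq_abs]
  have hk_sq : EqOn k
      (fun t => t • ((((t ^ 2) ^ (α - 1) : ℝ) : ℂ) / (((t ^ 2 : ℝ) : ℂ) + w))) (Ioi 0) := by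
    intro t (ht : 0 < t)
    have hpow : t ^ (2 * α - 1) = t * (t ^ 2) ^ (α - 1) := by
      rw [← rpow_natCast, ← rpow_mul ht.le,
        show 2 * α - 1 = ((2 : ℕ) : ℝ) * (α - 1) + 1 by push_cast; ring, rpow_add_one ht.ne',
        mul_comm]
    simp only [k, hpow, Complex.real_smul]
    push_cast
    ring
  set g : ℝ → ℂ := fun s => ((s ^ (α - 1) : ℝ) : ℂ) / ((s : ℂ) + w)
  rw [hk_abs, integral_comp_abs_eq_two_smul, setIntegral_congr_fun measurableSet_Ioi hk_sq,
    integral_Ioi_smul_comp_sq (g := g), integrable_comp_abs_iff,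
    integrableOn_congr_fun hk_sq measurableSet_Ioi, integrableOn_Ioi_smul_comp_sq_iff (g := g)]
  refine ⟨integrableOn_rpow_div_ofReal_add hα0 hα1 hw, ?_⟩
  rw [← stieltjesRpow, stieltjesRpow_eq hα0 hα1 hw, smul_smul]
  norm_num

theorem stmt_0_general (α β : ℝ) (hα0 : 0 < α) (hα1 : α < 1)
    (lam : ℂ) (hlam : ∀ x : ℝ, x ≤ -β → (x : ℂ) ≠ lam) :
    Integrable (fun ϑ : ℝ => ((|ϑ| ^ (2 * α - 1) : ℝ) : ℂ) / (lam + (β : ℂ) + (ϑ : ℂ) ^ 2)) ∧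
    ∫ ϑ : ℝ, ((|ϑ| ^ (2 * α - 1) : ℝ) : ℂ) / (lam + (β : ℂ) + (ϑ : ℂ) ^ 2)
      = ((π / Real.sin (α * π) : ℝ) : ℂ) * (lam + (β : ℂ)) ^ ((α : ℂ) - 1) :=
  integrable_and_integral_abs_rpow_div_add_sq hα0 hα1 (Complex.add_ofReal_mem_slitPlane hlam)

/-- Lemma 2.4 of the paper (complex parameter): for `0 < α < 1`, `β > 0` and a
complex `λ` not lying in the real interval `(-∞, -β]`, the improper integral
`∫ |ϑ|^(2α-1) / (λ + β + ϑ²) dϑ` converges and equals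
`(π / sin(απ)) · (λ + β)^(α-1)` (principal branch). -/
theorem stmt_0 (α β : ℝ) (hα0 : 0 < α) (hα1 : α < 1) (hβ : 0 < β)
    (lam : ℂ) (hlam : ∀ x : ℝ, x ≤ -β → (x : ℂ) ≠ lam) :
    Integrable (fun ϑ : ℝ => ((|ϑ| ^ (2 * α - 1) : ℝ) : ℂ) / (lam + (β : ℂ) + (ϑ : ℂ) ^ 2)) ∧
    ∫ ϑ : ℝ, ((|ϑ| ^ (2 * α - 1) : ℝ) : ℂ) / (lam + (β : ℂ) + (ϑ : ℂ) ^ 2)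
      = ((π / Real.sin (α * π) : ℝ) : ℂ) * (lam + (β : ℂ)) ^ ((α : ℂ) - 1) :=
  stmt_0_general α β hα0 hα1 lam hlam
end

section
/- Let 0 < α < 1, β > 0, t > 0, and let U : [0, ∞) → ℝ be continuous. Then (sin(απ)/π) · ∫_{−∞}^{+∞} |ϑ|^{2α−1} ( ∫_0^t e^{−(ϑ²+β)(t−s)} U(s) ds ) dϑ = (1/Γ(1−α)) · ∫_0^t (t−s)^{−α} e^{−β(t−s)} U(s) ds. -/
/-!
Since `|ϑ|^(2α-1) e^{-(ϑ²+β)τ} = e^{-βτ} · |ϑ|^(2α-1) e^{-τϑ²}`, the `ϑ`-integral of the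
kernel is the Gaussian moment `Γ(α) τ^{-α} e^{-βτ}`. Exchanging the `ϑ`- and `s`-integrals
(Fubini: the iterated integral of the absolute value is the same computation with `|U|`, and
`(t-s)^{-α}` is integrable since `α < 1`) turns the left-hand side into
`(sin(απ)/π) Γ(α) ∫₀ᵗ (t-s)^{-α} e^{-β(t-s)} U(s) ds`, and the reflection formula
`Γ(α) Γ(1-α) = π / sin(απ)` finishes.
-/

open Real MeasureTheory intervalIntegral Set

theorem integrable_abs_rpow_mul_exp_neg_mul_sq {b q : ℝ} (hb : 0 < b) (hq : -1 < q) :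
    Integrable fun x : ℝ => |x| ^ q * exp (-b * x ^ 2) := by
  have hIoi : IntegrableOn (fun x : ℝ => |x| ^ q * exp (-b * x ^ 2)) (Ioi 0) :=
    (integrableOn_rpow_mul_exp_neg_mul_sq hb hq).congr_fun
      (fun x hx => by rw [abs_of_pos hx]) measurableSet_Ioi
  rw [← integrableOn_univ, ← Iio_union_Ici (a := (0 : ℝ)), integrableOn_union,
    integrableOn_Ici_iff_integrableOn_Ioi]
  refine ⟨?_, hIoi⟩
  rw [← (Measure.measurePreserving_neg (volume : Measure ℝ)).integrableOn_comp_preimage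
      (Homeomorph.neg ℝ).measurableEmbedding]
  simpa only [Function.comp_def, abs_neg, neg_sq, neg_preimage, neg_Iio, neg_zero] using hIoi

theorem integral_abs_rpow_mul_exp_neg_mul_sq {b q : ℝ} (hb : 0 < b) (hq : -1 < q) :
    ∫ x : ℝ, |x| ^ q * exp (-b * x ^ 2) = b ^ (-(q + 1) / 2) * Gamma ((q + 1) / 2) := by
  have h := integral_comp_abs (f := fun x : ℝ => x ^ q * exp (-b * x ^ 2))
  simp only [sq_abs] at h
  simp_rw [h, ← rpow_two, integral_rpow_mul_exp_neg_mul_rpow two_pos hq hb]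
  ring

section DiffusiveKernel

variable {α β τ : ℝ}

theorem abs_rpow_mul_exp_neg_sq_add_mul (ϑ : ℝ) :
    |ϑ| ^ (2 * α - 1) * exp (-(ϑ ^ 2 + β) * τ)
      = exp (-β * τ) * (|ϑ| ^ (2 * α - 1) * exp (-τ * ϑ ^ 2)) := by
  rw [show -(ϑ ^ 2 + β) * τ = -τ * ϑ ^ 2 + -β * τ by ring, exp_add]
  ring

theorem integrable_abs_rpow_mul_exp_neg_sq_add_mul (hα : 0 < α) (hτ : 0 < τ) :
    Integrable fun ϑ : ℝ => |ϑ| ^ (2 * α - 1) * exp (-(ϑ ^ 2 + β) * τ) := by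
  simp_rw [abs_rpow_mul_exp_neg_sq_add_mul]
  exact (integrable_abs_rpow_mul_exp_neg_mul_sq hτ (by linarith)).const_mul _

theorem integral_abs_rpow_mul_exp_neg_sq_add_mul (hα : 0 < α) (hτ : 0 < τ) :
    ∫ ϑ : ℝ, |ϑ| ^ (2 * α - 1) * exp (-(ϑ ^ 2 + β) * τ)
      = Gamma α * τ ^ (-α) * exp (-β * τ) := by
  simp_rw [abs_rpow_mul_exp_neg_sq_add_mul, MeasureTheory.integral_const_mul,
    integral_abs_rpow_mul_exp_neg_mul_sq hτ (by linarith : -1 < 2 * α - 1)]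
  rw [show -(2 * α - 1 + 1) / 2 = -α by ring, show (2 * α - 1 + 1) / 2 = α by ring]
  ring

end DiffusiveKernel

theorem intervalIntegrable_sub_rpow_mul {a b r : ℝ} (hr : -1 < r) {g : ℝ → ℝ}
    (hg : ContinuousOn g (uIcc a b)) :
    IntervalIntegrable (fun s => (b - s) ^ r * g s) volume a b := by
  refine IntervalIntegrable.mul_continuousOn ?_ hg
  simpa using (intervalIntegrable_rpow' hr (a := b - a) (b := 0)).comp_sub_left b

section Fubini

variable {α β t : ℝ} {U : ℝ → ℝ}

theorem integrable_abs_rpow_mul_exp_neg_sq_add_mul_sub_mul (hα0 : 0 < α) (hα1 : α < 1)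
    (ht : 0 ≤ t) (hU : ContinuousOn U (Icc 0 t)) :
    Integrable
      (Function.uncurry fun ϑ s => |ϑ| ^ (2 * α - 1) * exp (-(ϑ ^ 2 + β) * (t - s)) * U s)
      (volume.prod (volume.restrict (Ioo 0 t))) := by
  have hUm : AEStronglyMeasurable U (volume.restrict (Ioo 0 t)) :=
    (hU.mono Ioo_subset_Icc_self).aestronglyMeasurable measurableSet_Ioo
  have hFm : AEStronglyMeasurable
      (fun p : ℝ × ℝ => |p.1| ^ (2 * α - 1) * exp (-(p.1 ^ 2 + β) * (t - p.2)) * U p.2)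
      (volume.prod (volume.restrict (Ioo 0 t))) :=
    ((Measurable.aestronglyMeasurable (by fun_prop)).mul
      (Continuous.aestronglyMeasurable (by fun_prop))).mul hUm.comp_snd
  refine (integrable_prod_iff' hFm).mpr ⟨?_, ?_⟩
  · filter_upwards [ae_restrict_mem measurableSet_Ioo] with s hs
    exact (integrable_abs_rpow_mul_exp_neg_sq_add_mul hα0 (sub_pos.mpr hs.2)).mul_const _
  · have hnorm : ∀ s ∈ Ioo 0 t,
        ∫ ϑ : ℝ, ‖|ϑ| ^ (2 * α - 1) * exp (-(ϑ ^ 2 + β) * (t - s)) * U s‖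
          = Gamma α * ((t - s) ^ (-α) * (exp (-β * (t - s)) * |U s|)) := by
      intro s hs
      simp_rw [norm_mul, Real.norm_eq_abs, abs_exp, abs_rpow_of_nonneg (abs_nonneg _),
        abs_abs, MeasureTheory.integral_mul_const,
        integral_abs_rpow_mul_exp_neg_sq_add_mul hα0 (sub_pos.mpr hs.2)]
      ring
    have hint : IntegrableOn (fun s => (t - s) ^ (-α) * (exp (-β * (t - s)) * |U s|)) (Ioo 0 t) :=
      (intervalIntegrable_iff_integrableOn_Ioo_of_le ht).mp <| intervalIntegrable_sub_rpow_mul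
        (by linarith) (by rw [uIcc_of_le ht]; fun_prop)
    refine (hint.const_mul (Gamma α)).congr ?_
    filter_upwards [ae_restrict_mem measurableSet_Ioo] with s hs
    exact (hnorm s hs).symm

theorem integral_abs_rpow_mul_integral_exp_neg_sq_add_mul (hα0 : 0 < α) (hα1 : α < 1)
    (ht : 0 ≤ t) (hU : ContinuousOn U (Icc 0 t)) :
    ∫ ϑ : ℝ, |ϑ| ^ (2 * α - 1) * (∫ s in (0:ℝ)..t, exp (-(ϑ ^ 2 + β) * (t - s)) * U s)
      = Gamma α * ∫ s in (0:ℝ)..t, (t - s) ^ (-α) * exp (-β * (t - s)) * U s := by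
  calc _ = ∫ ϑ : ℝ, ∫ s in Ioo 0 t, |ϑ| ^ (2 * α - 1) * exp (-(ϑ ^ 2 + β) * (t - s)) * U s := by
        congr with ϑ
        simp_rw [integral_of_le ht, integral_Ioc_eq_integral_Ioo,
          ← MeasureTheory.integral_const_mul, mul_assoc]
    _ = ∫ s in Ioo 0 t, ∫ ϑ : ℝ, |ϑ| ^ (2 * α - 1) * exp (-(ϑ ^ 2 + β) * (t - s)) * U s :=
        integral_integral_swap <|
          integrable_abs_rpow_mul_exp_neg_sq_add_mul_sub_mul hα0 hα1 ht hU
    _ = ∫ s in Ioo 0 t, Gamma α * ((t - s) ^ (-α) * exp (-β * (t - s)) * U s) := by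
        refine setIntegral_congr_fun measurableSet_Ioo fun s hs => ?_
        rw [MeasureTheory.integral_mul_const,
          integral_abs_rpow_mul_exp_neg_sq_add_mul hα0 (sub_pos.mpr hs.2)]
        ring
    _ = Gamma α * ∫ s in (0:ℝ)..t, (t - s) ^ (-α) * exp (-β * (t - s)) * U s := by
        rw [MeasureTheory.integral_const_mul, integral_of_le ht, integral_Ioc_eq_integral_Ioo]

end Fubini

theorem sin_mul_pi_div_pi_mul_Gamma {α : ℝ} (hα0 : 0 < α) (hα1 : α < 1) :
    sin (α * π) / π * Gamma α = 1 / Gamma (1 - α) := by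
  have hsin : sin (π * α) ≠ 0 :=
    (sin_pos_of_pos_of_lt_pi (by positivity) (by nlinarith [pi_pos])).ne'
  have hΓ : Gamma (1 - α) ≠ 0 := (Gamma_pos_of_pos (by linarith)).ne'
  have href := Gamma_mul_Gamma_one_sub α
  rw [eq_div_iff hsin] at href
  rw [mul_comm α π]
  field_simp
  linear_combination href

theorem stmt_3_general (α β t : ℝ) (hα0 : 0 < α) (hα1 : α < 1) (ht : 0 < t)
    (U : ℝ → ℝ) (hU : ContinuousOn U (Set.Ici 0)) :
    (Real.sin (α * π) / π) *
        ∫ ϑ : ℝ, |ϑ| ^ (2 * α - 1) *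
          (∫ s in (0:ℝ)..t, Real.exp (-(ϑ ^ 2 + β) * (t - s)) * U s)
      = (1 / Real.Gamma (1 - α)) *
          ∫ s in (0:ℝ)..t, (t - s) ^ (-α) * Real.exp (-β * (t - s)) * U s := by
  rw [integral_abs_rpow_mul_integral_exp_neg_sq_add_mul hα0 hα1 ht.le
    (hU.mono Icc_subset_Ici_self), ← mul_assoc, sin_mul_pi_div_pi_mul_Gamma hα0 hα1]

/-- Output identity of Lemma 2.3 of the paper: the diffusive realization of the
truncated fractional integral `I^{1-α,β}U`. -/
theorem stmt_3 (α β t : ℝ) (hα0 : 0 < α) (hα1 : α < 1) (hβ : 0 < β) (ht : 0 < t)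
    (U : ℝ → ℝ) (hU : ContinuousOn U (Set.Ici 0)) :
    (Real.sin (α * π) / π) *
        ∫ ϑ : ℝ, |ϑ| ^ (2 * α - 1) *
          (∫ s in (0:ℝ)..t, Real.exp (-(ϑ ^ 2 + β) * (t - s)) * U s)
      = (1 / Real.Gamma (1 - α)) *
          ∫ s in (0:ℝ)..t, (t - s) ^ (-α) * Real.exp (-β * (t - s)) * U s :=
  stmt_3_general α β t hα0 hα1 ht U hU
end

section
/- Let 0 < α < 1 and β > 0, and let φ : ℝ → ℝ be a measurable function such that ∫_{−∞}^{+∞} (ϑ² + β) φ(ϑ)² dϑ < ∞. Then ( ∫_{−∞}^{+∞} |φ(ϑ)| · |ϑ|^{α − 1/2} dϑ )² ≤ (π / sin(απ)) · β^{α−1} · ∫_{−∞}^{+∞} (ϑ² + β) φ(ϑ)² dϑ. -/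
/-!
Write the integrand as `√((ϑ² + β) φ²) · √(|ϑ|^{2α-1} / (ϑ² + β))` and apply Cauchy–Schwarz.
The weight integral reduces, by `ϑ ↦ |ϑ|`, `t ↦ t²`, `x ↦ x / β` and `x ↦ x / (1 + x)`, to the
Beta integral `B(α, 1 - α) = Γ(α) Γ(1 - α) = π / sin(πα)`, which gives
`M = (π / sin(απ)) β^{α-1}`.
-/

open Real MeasureTheory Set

theorem integral_rpow_mul_one_sub_rpow {a b : ℝ} (ha : 0 < a) (hb : 0 < b) :
    ∫ t in (0:ℝ)..1, t ^ (a - 1) * (1 - t) ^ (b - 1) = Gamma a * Gamma b / Gamma (a + b) := by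
  have hbeta := Complex.Gamma_mul_Gamma_eq_betaIntegral (s := a) (t := b)
    (by simpa using ha) (by simpa using hb)
  have hreal : Complex.betaIntegral a b =
      ((∫ t in (0:ℝ)..1, t ^ (a - 1) * (1 - t) ^ (b - 1) : ℝ) : ℂ) := by
    rw [Complex.betaIntegral, ← intervalIntegral.integral_ofReal]
    refine intervalIntegral.integral_congr fun t ht => ?_
    rw [uIcc_of_le zero_le_one] at ht
    push_cast
    rw [← Complex.ofReal_one, ← Complex.ofReal_sub, Complex.ofReal_cpow ht.1,
      Complex.ofReal_cpow (sub_nonneg.2 ht.2)]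
    push_cast
    rfl
  rw [hreal, ← Complex.ofReal_add] at hbeta
  simp only [Complex.Gamma_ofReal] at hbeta
  rw [eq_div_iff (Gamma_pos_of_pos (add_pos ha hb)).ne', mul_comm]
  exact_mod_cast hbeta.symm

theorem image_div_one_add_Ioi : (fun x : ℝ => x / (1 + x)) '' Ioi 0 = Ioo 0 1 := by
  ext t
  constructor
  · rintro ⟨x, hx, rfl⟩
    have hx : (0:ℝ) < x := hx
    exact ⟨by positivity, (div_lt_one (by positivity)).2 (by linarith)⟩
  · rintro ⟨ht0, ht1⟩
    refine ⟨t / (1 - t), div_pos ht0 (sub_pos.2 ht1), ?_⟩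
    have : 1 - t ≠ 0 := (sub_pos.2 ht1).ne'
    field_simp
    ring

theorem injOn_div_one_add_Ioi : InjOn (fun x : ℝ => x / (1 + x)) (Ioi 0) := by
  intro x hx y hy hxy
  have hx : (0:ℝ) < x := hx
  have hy : (0:ℝ) < y := hy
  field_simp at hxy
  linarith

theorem hasDerivAt_div_one_add {x : ℝ} (hx : 0 < x) :
    HasDerivAt (fun x : ℝ => x / (1 + x)) ((1 + x) ^ 2)⁻¹ x := by
  refine ((hasDerivAt_id' x).div ((hasDerivAt_id' x).const_add 1) (by positivity)).congr_deriv ?_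
  field_simp
  ring

theorem integral_Ioi_rpow_mul_one_add_rpow {a b : ℝ} (ha : 0 < a) (hb : 0 < b) :
    ∫ x in Ioi (0:ℝ), x ^ (a - 1) * (1 + x) ^ (-(a + b)) =
      Gamma a * Gamma b / Gamma (a + b) := by
  rw [← integral_rpow_mul_one_sub_rpow ha hb, intervalIntegral.integral_of_le zero_le_one,
    integral_Ioc_eq_integral_Ioo, ← image_div_one_add_Ioi,
    integral_image_eq_integral_abs_deriv_smul measurableSet_Ioi
      (fun x hx => (hasDerivAt_div_one_add hx).hasDerivWithinAt) injOn_div_one_add_Ioi]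
  refine setIntegral_congr_fun measurableSet_Ioi fun x (hx : 0 < x) => ?_
  have h1x : 0 < 1 + x := by positivity
  have hsub : 1 - x / (1 + x) = (1 + x)⁻¹ := by field_simp; ring
  have hpow : (1 + x) ^ (-(a + b)) =
      ((1 + x) ^ 2 * (1 + x) ^ (a - 1) * (1 + x) ^ (b - 1))⁻¹ := by
    rw [← rpow_natCast, ← rpow_add h1x, ← rpow_add h1x, ← rpow_neg h1x.le]
    ring_nf
  rw [hsub, div_rpow hx.le h1x.le, inv_rpow h1x.le, smul_eq_mul, abs_of_pos (by positivity),
    hpow, mul_inv, mul_inv]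
  ring

theorem integral_Ioi_rpow_div_add {a β : ℝ} (ha0 : 0 < a) (ha1 : a < 1) (hβ : 0 < β) :
    ∫ x in Ioi (0:ℝ), x ^ (a - 1) / (x + β) = π / sin (π * a) * β ^ (a - 1) := by
  have hbeta : ∫ u in Ioi (0:ℝ), u ^ (a - 1) * (1 + u) ^ (-(a + (1 - a))) = π / sin (π * a) := by
    rw [integral_Ioi_rpow_mul_one_add_rpow ha0 (sub_pos.2 ha1), add_sub_cancel, Gamma_one,
      div_one, Gamma_mul_Gamma_one_sub]
  have hpt : ∀ u ∈ Ioi (0:ℝ), (β * u) ^ (a - 1) / (β * u + β) =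
      β ^ (a - 2) * (u ^ (a - 1) * (1 + u) ^ (-(a + (1 - a)))) := fun u (hu : 0 < u) => by
    rw [mul_rpow hβ.le hu.le, add_sub_cancel, rpow_neg_one, show a - 1 = (a - 2) + 1 by ring,
      rpow_add_one hβ.ne']
    field_simp
    ring
  have hscale := integral_comp_mul_left_Ioi (fun x => x ^ (a - 1) / (x + β)) 0 hβ
  rw [mul_zero, smul_eq_mul, eq_inv_mul_iff_mul_eq₀ hβ.ne'] at hscale
  rw [← hscale, setIntegral_congr_fun measurableSet_Ioi hpt, integral_const_mul, hbeta,
    ← mul_assoc, ← rpow_one_add' hβ.le (by linarith)]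
  ring_nf

theorem integral_abs_rpow_div_sq_add {a β : ℝ} (ha0 : 0 < a) (ha1 : a < 1) (hβ : 0 < β) :
    ∫ ϑ : ℝ, |ϑ| ^ (2 * a - 1) / (ϑ ^ 2 + β) = π / sin (π * a) * β ^ (a - 1) := by
  have hpt : ∀ t ∈ Ioi (0:ℝ),
      (2 * t ^ ((2:ℝ) - 1)) • ((t ^ (2:ℝ)) ^ (a - 1) / (t ^ (2:ℝ) + β)) =
        2 * (t ^ (2 * a - 1) / (t ^ 2 + β)) := fun t (ht : 0 < t) => by
    have hexp : t ^ ((2:ℝ) - 1) * (t ^ (2:ℝ)) ^ (a - 1) = t ^ (2 * a - 1) := by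
      rw [← rpow_mul ht.le, ← rpow_add ht]
      ring_nf
    rw [smul_eq_mul, ← hexp, rpow_two]
    ring
  have habs : (fun ϑ : ℝ => |ϑ| ^ (2 * a - 1) / (ϑ ^ 2 + β)) =
      fun ϑ => (fun t : ℝ => t ^ (2 * a - 1) / (t ^ 2 + β)) |ϑ| := by
    simp only [sq_abs]
  rw [habs, integral_comp_abs (f := fun t : ℝ => t ^ (2 * a - 1) / (t ^ 2 + β)),
    ← integral_const_mul, ← setIntegral_congr_fun measurableSet_Ioi hpt,
    integral_comp_rpow_Ioi_of_pos (g := fun y => y ^ (a - 1) / (y + β)) two_pos,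
    integral_Ioi_rpow_div_add ha0 ha1 hβ]

theorem integrable_abs_rpow_div_sq_add {a β : ℝ} (ha0 : 0 < a) (ha1 : a < 1) (hβ : 0 < β) :
    Integrable fun ϑ : ℝ => |ϑ| ^ (2 * a - 1) / (ϑ ^ 2 + β) := by
  have hsin : 0 < sin (π * a) := sin_pos_of_pos_of_lt_pi (by positivity) (by nlinarith [pi_pos])
  refine Integrable.of_integral_ne_zero ?_
  rw [integral_abs_rpow_div_sq_add ha0 ha1 hβ]
  positivity

section CauchySchwarz

variable {X : Type*} [MeasurableSpace X] {μ : Measure X} {f g : X → ℝ}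

theorem memLp_two_sqrt (hf : Integrable f μ) (hf0 : 0 ≤ᵐ[μ] f) :
    MemLp (fun x => √(f x)) 2 μ :=
  (memLp_two_iff_integrable_sq (continuous_sqrt.comp_aestronglyMeasurable hf.1)).2
    (hf.congr (hf0.mono fun _ hx => (sq_sqrt hx).symm))

theorem integral_sqrt_rpow_two (hf0 : 0 ≤ᵐ[μ] f) :
    ∫ x, √(f x) ^ (2:ℝ) ∂μ = ∫ x, f x ∂μ :=
  integral_congr_ae (hf0.mono fun _ hx => by simp only [rpow_two, sq_sqrt hx])

theorem sq_integral_sqrt_mul_sqrt_le (hf : Integrable f μ) (hg : Integrable g μ)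
    (hf0 : 0 ≤ᵐ[μ] f) (hg0 : 0 ≤ᵐ[μ] g) :
    (∫ x, √(f x) * √(g x) ∂μ) ^ 2 ≤ (∫ x, f x ∂μ) * ∫ x, g x ∂μ := by
  have hholder := integral_mul_le_Lp_mul_Lq_of_nonneg HolderConjugate.two_two
    (ae_of_all μ fun x => sqrt_nonneg (f x)) (ae_of_all μ fun x => sqrt_nonneg (g x))
    (by simpa using memLp_two_sqrt hf hf0) (by simpa using memLp_two_sqrt hg hg0)
  rw [integral_sqrt_rpow_two hf0, integral_sqrt_rpow_two hg0, ← sqrt_eq_rpow,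
    ← sqrt_eq_rpow] at hholder
  calc (∫ x, √(f x) * √(g x) ∂μ) ^ 2
      ≤ (√(∫ x, f x ∂μ) * √(∫ x, g x ∂μ)) ^ 2 :=
        pow_le_pow_left₀ (integral_nonneg fun x => by positivity) hholder 2
    _ = (∫ x, f x ∂μ) * ∫ x, g x ∂μ := by
        rw [mul_pow, sq_sqrt (integral_nonneg_of_ae hf0), sq_sqrt (integral_nonneg_of_ae hg0)]

end CauchySchwarz

theorem stmt_6_general (α β : ℝ) (hα0 : 0 < α) (hα1 : α < 1) (hβ : 0 < β)
    (φ : ℝ → ℝ)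
    (hint : Integrable (fun ϑ : ℝ => (ϑ ^ 2 + β) * (φ ϑ) ^ 2)) :
    (∫ ϑ : ℝ, |φ ϑ| * |ϑ| ^ (α - 1/2)) ^ 2
      ≤ (π / Real.sin (α * π)) * β ^ (α - 1) *
          ∫ ϑ : ℝ, (ϑ ^ 2 + β) * (φ ϑ) ^ 2 := by
  have hfactor : ∀ ϑ : ℝ, |φ ϑ| * |ϑ| ^ (α - 1/2) =
      √((ϑ ^ 2 + β) * φ ϑ ^ 2) * √(|ϑ| ^ (2 * α - 1) / (ϑ ^ 2 + β)) := fun ϑ => by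
    rw [← sqrt_mul (by positivity),
      show (ϑ ^ 2 + β) * φ ϑ ^ 2 * (|ϑ| ^ (2 * α - 1) / (ϑ ^ 2 + β)) =
        φ ϑ ^ 2 * |ϑ| ^ (2 * α - 1) by field_simp,
      sqrt_mul (sq_nonneg _), sqrt_sq_eq_abs, sqrt_eq_rpow, ← rpow_mul (abs_nonneg ϑ)]
    ring_nf
  have hCS := sq_integral_sqrt_mul_sqrt_le hint (integrable_abs_rpow_div_sq_add hα0 hα1 hβ)
    (ae_of_all _ fun ϑ => by positivity) (ae_of_all _ fun ϑ => by positivity)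
  rw [integral_abs_rpow_div_sq_add hα0 hα1 hβ] at hCS
  simp_rw [hfactor, mul_comm α π]
  exact hCS.trans_eq (mul_comm _ _)

/-- Weighted Cauchy–Schwarz estimate used in Lemma 4.4 and Theorem 6.2 of the
paper: `(∫ |φ(ϑ)| |ϑ|^{α-1/2} dϑ)² ≤ (π/sin(απ)) β^{α-1} ∫ (ϑ²+β) φ(ϑ)² dϑ`. -/
theorem stmt_6 (α β : ℝ) (hα0 : 0 < α) (hα1 : α < 1) (hβ : 0 < β)
    (φ : ℝ → ℝ) (hmeas : Measurable φ)
    (hint : Integrable (fun ϑ : ℝ => (ϑ ^ 2 + β) * (φ ϑ) ^ 2)) :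
    (∫ ϑ : ℝ, |φ ϑ| * |ϑ| ^ (α - 1/2)) ^ 2
      ≤ (π / Real.sin (α * π)) * β ^ (α - 1) *
          ∫ ϑ : ℝ, (ϑ ^ 2 + β) * (φ ϑ) ^ 2 :=
  stmt_6_general α β hα0 hα1 hβ φ hint
end

section
/- Let 0 < γ < 1, ϖ > 0, T > 0, and let B : [0, T] → ℝ be continuous on [0, T] and differentiable on (0, T) with B(0) > 0 and B′(t) ≥ ϖ · B(t)^{1/(1−γ)} for all t ∈ (0, T) at which B(t) > 0. Then T < T* := (1−γ) / (ϖ γ · B(0)^{γ/(1−γ)}). -/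
open Real

/-- Finite-time blow-up conclusion of Theorem 6.2 of the paper: the solution of
the differential inequality `B' ≥ ϖ B^{1/(1-γ)}`, `B(0) > 0`, cannot exist up to
time `T* = (1-γ)/(ϖγ B(0)^{γ/(1-γ)})`. -/
theorem stmt_8 (γ ϖ T : ℝ) (hγ0 : 0 < γ) (hγ1 : γ < 1) (hϖ : 0 < ϖ) (hT : 0 < T)
    (B B' : ℝ → ℝ)
    (hBc : ContinuousOn B (Set.Icc 0 T))
    (hBd : ∀ t ∈ Set.Ioo 0 T, HasDerivAt B (B' t) t)
    (hB0 : 0 < B 0)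
    (hB' : ∀ t ∈ Set.Ioo 0 T, 0 < B t → ϖ * B t ^ (1 / (1 - γ)) ≤ B' t) :
    T < (1 - γ) / (ϖ * γ * B 0 ^ (γ / (1 - γ))) := by
  have h1γ : 0 < 1 - γ := by linarith
  -- Step 1: B is positive on [0, T]
  have hBpos : ∀ t ∈ Set.Icc (0:ℝ) T, 0 < B t := by
    by_contra h
    push_neg at h
    obtain ⟨t₁, ht₁, hBt₁⟩ := h
    set S : Set ℝ := Set.Icc (0:ℝ) T ∩ B ⁻¹' Set.Iic 0 with hS
    have hSne : S.Nonempty := ⟨t₁, ht₁, hBt₁⟩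
    have hSbdd : BddBelow S := ⟨0, fun x hx => hx.1.1⟩
    have hSclosed : IsClosed S :=
      hBc.preimage_isClosed_of_isClosed isClosed_Icc isClosed_Iic
    set t₀ := sInf S with ht₀
    have ht₀S : t₀ ∈ S := hSclosed.csInf_mem hSne hSbdd
    have ht₀0 : 0 ≤ t₀ := ht₀S.1.1
    have ht₀T : t₀ ≤ T := ht₀S.1.2
    have hBt₀ : B t₀ ≤ 0 := ht₀S.2
    have ht₀pos : 0 < t₀ := by
      rcases lt_or_eq_of_le ht₀0 with h | h
      · exact h
      · exfalso; rw [← h] at hBt₀; linarith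
    have hposlt : ∀ s, 0 ≤ s → s < t₀ → 0 < B s := by
      intro s hs0 hst
      by_contra hc
      push_neg at hc
      have : s ∈ S := ⟨⟨hs0, le_trans hst.le ht₀T⟩, hc⟩
      exact absurd (csInf_le hSbdd this) (not_le.mpr hst)
    have hmono : StrictMonoOn B (Set.Icc 0 t₀) := by
      apply strictMonoOn_of_deriv_pos (convex_Icc 0 t₀)
      · exact hBc.mono (Set.Icc_subset_Icc le_rfl ht₀T)
      · intro x hx
        rw [interior_Icc] at hx
        have hxT : x ∈ Set.Ioo 0 T := ⟨hx.1, lt_of_lt_of_le hx.2 ht₀T⟩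
        have hBx : 0 < B x := hposlt x hx.1.le hx.2
        rw [(hBd x hxT).deriv]
        exact lt_of_lt_of_le (by positivity) (hB' x hxT hBx)
    have : B 0 < B t₀ :=
      hmono ⟨le_rfl, ht₀0⟩ ⟨ht₀0, le_rfl⟩ ht₀pos
    linarith
  -- Step 2: the function g t = B t ^ q + c t is antitone, q = -(γ/(1-γ)), c = ϖγ/(1-γ)
  set q : ℝ := -(γ / (1 - γ)) with hq
  set c : ℝ := ϖ * γ / (1 - γ) with hc
  have hcpos : 0 < c := by positivity
  have hqneg : q < 0 := by
    rw [hq]; simp only [neg_neg, neg_lt, neg_zero]; positivity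
  set g : ℝ → ℝ := fun t => B t ^ q + c * t with hg
  have hganti : AntitoneOn g (Set.Icc 0 T) := by
    apply antitoneOn_of_deriv_nonpos (convex_Icc 0 T)
    · apply ContinuousOn.add _ (continuousOn_const.mul continuousOn_id)
      exact hBc.rpow_const (fun x hx => Or.inl (hBpos x hx).ne')
    · intro x hx
      rw [interior_Icc] at hx
      have hBx : 0 < B x := hBpos x (Set.mem_Icc_of_Ioo hx)
      exact ((((hBd x hx).rpow_const (Or.inl hBx.ne')).add
        ((hasDerivAt_id x).const_mul c)).differentiableAt.differentiableWithinAt)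
    · intro x hx
      rw [interior_Icc] at hx
      have hBx : 0 < B x := hBpos x (Set.mem_Icc_of_Ioo hx)
      have hder : HasDerivAt g (B' x * q * B x ^ (q - 1) + c * 1) x :=
        ((hBd x hx).rpow_const (Or.inl hBx.ne')).add ((hasDerivAt_id x).const_mul c)
      rw [hder.deriv]
      have hcomm : B' x * q * B x ^ (q - 1) = q * B x ^ (q - 1) * B' x := by ring
      have hkey : q * B x ^ (q - 1) * B' x ≤ -c := by
        have h1 : q * B x ^ (q - 1) < 0 :=
          mul_neg_of_neg_of_pos hqneg (rpow_pos_of_pos hBx _)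
        have h2 : ϖ * B x ^ (1 / (1 - γ)) ≤ B' x := hB' x hx hBx
        calc q * B x ^ (q - 1) * B' x
            ≤ q * B x ^ (q - 1) * (ϖ * B x ^ (1 / (1 - γ))) := by
              exact mul_le_mul_of_nonpos_left h2 h1.le
          _ = q * ϖ * (B x ^ (q - 1) * B x ^ (1 / (1 - γ))) := by ring
          _ = q * ϖ * B x ^ (q - 1 + 1 / (1 - γ)) := by
              rw [← Real.rpow_add hBx]
          _ = -c := by
              have : q - 1 + 1 / (1 - γ) = 0 := by
                rw [hq]; field_simp; ring
              rw [this, Real.rpow_zero, mul_one, hq, hc]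
              field_simp
      linarith
  have hgT : g T ≤ g 0 :=
    hganti (Set.left_mem_Icc.mpr hT.le) (Set.right_mem_Icc.mpr hT.le) hT.le
  have hBT : 0 < B T := hBpos T (Set.right_mem_Icc.mpr hT.le)
  have hBTq : 0 < B T ^ q := rpow_pos_of_pos hBT q
  have hlt : c * T < B 0 ^ q := by
    have : B T ^ q + c * T ≤ B 0 ^ q + c * 0 := hgT
    nlinarith
  -- conclude
  have hB0q : B 0 ^ q = (B 0 ^ (γ / (1 - γ)))⁻¹ := by
    rw [hq, Real.rpow_neg hB0.le]
  have hb : 0 < B 0 ^ (γ / (1 - γ)) := rpow_pos_of_pos hB0 _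
  rw [hB0q, hc] at hlt
  have h2 : ϖ * γ / (1 - γ) * T * (B 0 ^ (γ / (1 - γ))) < 1 := by
    have := mul_lt_mul_of_pos_right hlt hb
    rwa [inv_mul_cancel₀ hb.ne'] at this
  rw [lt_div_iff₀ (by positivity)]
  have h3 : T * (ϖ * γ * B 0 ^ (γ / (1 - γ)))
      = ϖ * γ / (1 - γ) * T * (B 0 ^ (γ / (1 - γ))) * (1 - γ) := by
    field_simp
  rw [h3]
  nlinarith
end

section
/- Let 0 < d ≤ 1, let 1 ≤ r < ∞ be real, and let C_r > 0. Write Ω_d = (0, π) × (−d, d) ⊂ ℝ² and Ω₁ = (0, π) × (−1, 1). Suppose that for every twice continuously differentiable function v : ℝ² → ℝ one has ∫_{Ω₁} |v|^r ≤ C_r · ( ∫_{Ω₁} ( |v|² + ‖Dv‖² + ‖D²v‖² ) )^{r/2}, where Dv and D²v denote the first and second Fréchet derivatives of v and ‖·‖ the operator norm. Then for every twice continuously differentiable function u : ℝ² → ℝ one has ∫_{Ω_d} |u|^r ≤ C_r · d^{1 − r/2} · ( ∫_{Ω_d} ( |u|² + ‖Du‖² + ‖D²u‖² ) )^{r/2}.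 -/
/-!
Rescale `v(x, η) = u(x, dη)`, i.e. `v = u ∘ L` with `L (x, η) = (x, dη)`, which maps `Ω₁` onto
`Ω_d` with Jacobian `d`; so `∫_{Ω_d} |u|^r = d ∫_{Ω₁} |v|^r`. By the chain rule `Dv` and `D²v`
are `Du` and `D²u` precomposed with `L`, and `‖L‖ ≤ 1` because `d ≤ 1`, so the `H²` integrand
of `v` is pointwise at most that of `u` at `L z`. Hence `‖v‖²_{H²(Ω₁)} ≤ d⁻¹ ‖u‖²_{H²(Ω_d)}`,
and the embedding on `Ω₁` applied to `v` gives the factor `d · d^{-r/2}`.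
-/

open Real MeasureTheory

section PrecompositionByLinearMap

variable {𝕜 : Type*} [NontriviallyNormedField 𝕜]
  {E F G : Type*} [NormedAddCommGroup E] [NormedSpace 𝕜 E] [NormedAddCommGroup F]
  [NormedSpace 𝕜 F] [NormedAddCommGroup G] [NormedSpace 𝕜 G]

theorem fderiv_comp_continuousLinearMap {u : E → F} (hu : Differentiable 𝕜 u) (L : G →L[𝕜] E) :
    fderiv 𝕜 (u ∘ L) = fun z => (fderiv 𝕜 u (L z)).comp L := by
  funext z
  rw [fderiv_comp z (hu _) L.differentiableAt, L.fderiv]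

theorem norm_fderiv_comp_continuousLinearMap_le {u : E → F} (hu : Differentiable 𝕜 u)
    (L : G →L[𝕜] E) (z : G) : ‖fderiv 𝕜 (u ∘ L) z‖ ≤ ‖fderiv 𝕜 u (L z)‖ * ‖L‖ := by
  rw [fderiv_comp_continuousLinearMap hu]
  exact (fderiv 𝕜 u (L z)).opNorm_comp_le L

theorem norm_fderiv_fderiv_comp_continuousLinearMap_le {u : E → F} (hu : Differentiable 𝕜 u)
    (hu' : Differentiable 𝕜 (fderiv 𝕜 u)) (L : G →L[𝕜] E) (z : G) :
    ‖fderiv 𝕜 (fderiv 𝕜 (u ∘ L)) z‖ ≤ ‖fderiv 𝕜 (fderiv 𝕜 u) (L z)‖ * ‖L‖ ^ 2 := by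
  set P : (E →L[𝕜] F) →L[𝕜] (G →L[𝕜] F) := (ContinuousLinearMap.compL 𝕜 G E F).flip L
  have hP : ‖P‖ ≤ ‖L‖ := P.opNorm_le_bound (norm_nonneg L) fun w =>
    (w.opNorm_comp_le L).trans_eq (mul_comm _ _)
  have hDu : fderiv 𝕜 (u ∘ L) = P ∘ (fderiv 𝕜 u ∘ L) := fderiv_comp_continuousLinearMap hu L
  rw [hDu, fderiv_comp z P.differentiableAt (hu'.comp L.differentiable z), P.fderiv]
  calc ‖P.comp (fderiv 𝕜 (fderiv 𝕜 u ∘ L) z)‖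
      ≤ ‖L‖ * (‖fderiv 𝕜 (fderiv 𝕜 u) (L z)‖ * ‖L‖) :=
        (P.opNorm_comp_le _).trans (mul_le_mul hP
          (norm_fderiv_comp_continuousLinearMap_le hu' L z) (norm_nonneg _) (norm_nonneg L))
    _ = ‖fderiv 𝕜 (fderiv 𝕜 u) (L z)‖ * ‖L‖ ^ 2 := by ring

end PrecompositionByLinearMap

section H2Integrand

variable {E : Type*} [NormedAddCommGroup E] [NormedSpace ℝ E]

noncomputable def h2Integrand (u : E → ℝ) (z : E) : ℝ :=
  |u z| ^ 2 + ‖fderiv ℝ u z‖ ^ 2 + ‖fderiv ℝ (fderiv ℝ u) z‖ ^ 2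

theorem h2Integrand_nonneg (u : E → ℝ) (z : E) : 0 ≤ h2Integrand u z := by
  unfold h2Integrand; positivity

theorem integral_h2Integrand_nonneg [MeasurableSpace E] (u : E → ℝ) (μ : Measure E) :
    0 ≤ ∫ z, h2Integrand u z ∂μ :=
  integral_nonneg (h2Integrand_nonneg u)

theorem ContDiff.continuous_h2Integrand {u : E → ℝ} (hu : ContDiff ℝ 2 u) :
    Continuous (h2Integrand u) := by
  have hDu : ContDiff ℝ 1 (fderiv ℝ u) := hu.fderiv_right (by norm_num)
  exact ((hu.continuous.abs.pow 2).add ((hu.continuous_fderiv two_ne_zero).norm.pow 2)).add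
    ((Continuous.norm (f := fderiv ℝ (fderiv ℝ u)) (hDu.continuous_fderiv one_ne_zero)).pow 2)

theorem ContDiff.h2Integrand_comp_le {u : E → ℝ} (hu : ContDiff ℝ 2 u) {L : E →L[ℝ] E}
    (hL : ‖L‖ ≤ 1) (z : E) : h2Integrand (u ∘ L) z ≤ h2Integrand u (L z) := by
  have hu₁ : Differentiable ℝ u := hu.differentiable (by norm_num)
  have hu₂ : Differentiable ℝ (fderiv ℝ u) :=
    (hu.fderiv_right (m := 1) (by norm_num)).differentiable one_ne_zero
  have hD : ‖fderiv ℝ (u ∘ L) z‖ ≤ ‖fderiv ℝ u (L z)‖ :=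
    (norm_fderiv_comp_continuousLinearMap_le hu₁ L z).trans
      (mul_le_of_le_one_right (norm_nonneg _) hL)
  have hD2 : ‖fderiv ℝ (fderiv ℝ (u ∘ L)) z‖ ≤ ‖fderiv ℝ (fderiv ℝ u) (L z)‖ :=
    (norm_fderiv_fderiv_comp_continuousLinearMap_le hu₁ hu₂ L z).trans
      (mul_le_of_le_one_right (norm_nonneg (fderiv ℝ (fderiv ℝ u) (L z)))
        (pow_le_one₀ (norm_nonneg L) hL))
  unfold h2Integrand
  rw [Function.comp_apply]
  gcongr

end H2Integrand

def strip (d : ℝ) : Set (ℝ × ℝ) := Set.Ioo 0 π ×ˢ Set.Ioo (-d) d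

def stretchSnd (d : ℝ) : ℝ × ℝ →L[ℝ] ℝ × ℝ :=
  (ContinuousLinearMap.fst ℝ ℝ ℝ).prod (d • ContinuousLinearMap.snd ℝ ℝ ℝ)

@[simp]
theorem stretchSnd_apply (d : ℝ) (z : ℝ × ℝ) : stretchSnd d z = (z.1, d * z.2) := rfl

theorem norm_stretchSnd_le {d : ℝ} (hd : |d| ≤ 1) : ‖stretchSnd d‖ ≤ 1 := by
  rw [stretchSnd, ContinuousLinearMap.opNorm_prod, Prod.norm_def]
  refine max_le (ContinuousLinearMap.norm_fst_le ℝ ℝ ℝ) ?_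
  calc ‖d • ContinuousLinearMap.snd ℝ ℝ ℝ‖ ≤ ‖d‖ * ‖ContinuousLinearMap.snd ℝ ℝ ℝ‖ :=
        (norm_smul d _).le
    _ ≤ 1 * 1 := mul_le_mul hd (ContinuousLinearMap.norm_snd_le ℝ ℝ ℝ) (norm_nonneg _) zero_le_one
    _ = 1 := one_mul 1

theorem Continuous.integrableOn_strip {g : ℝ × ℝ → ℝ} (hg : Continuous g) (d : ℝ) :
    IntegrableOn g (strip d) :=
  (hg.continuousOn.integrableOn_compact (isCompact_Icc.prod isCompact_Icc)).mono_set
    (Set.prod_mono Set.Ioo_subset_Icc_self Set.Ioo_subset_Icc_self)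

theorem Continuous.setIntegral_strip_eq_mul {g : ℝ × ℝ → ℝ} (hg : Continuous g) {d : ℝ}
    (hd : 0 < d) : ∫ z in strip d, g z = d * ∫ z in strip 1, g (stretchSnd d z) := by
  have h₁ := hg.integrableOn_strip d
  have h₂ : IntegrableOn (fun z => g (stretchSnd d z)) (strip 1) :=
    (hg.comp (stretchSnd d).continuous).integrableOn_strip 1
  rw [strip, Measure.volume_eq_prod] at h₁ h₂
  rw [strip, strip, Measure.volume_eq_prod, setIntegral_prod _ h₁, setIntegral_prod _ h₂,
    ← integral_const_mul]
  refine setIntegral_congr_fun measurableSet_Ioo fun x _ => ?_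
  rw [← integral_Ioc_eq_integral_Ioo, ← integral_Ioc_eq_integral_Ioo,
    ← intervalIntegral.integral_of_le (by linarith),
    ← intervalIntegral.integral_of_le (by norm_num), ← smul_eq_mul]
  simp only [stretchSnd_apply]
  rw [intervalIntegral.smul_integral_comp_mul_left (fun y => g (x, y)) d, mul_neg_one, mul_one]

theorem ContDiff.setIntegral_strip_h2Integrand_comp_stretchSnd_le {u : ℝ × ℝ → ℝ}
    (hu : ContDiff ℝ 2 u) {d : ℝ} (hd0 : 0 < d) (hd1 : d ≤ 1) :
    ∫ z in strip 1, h2Integrand (u ∘ stretchSnd d) z ≤ d⁻¹ * ∫ z in strip d, h2Integrand u z := by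
  have hv : ContDiff ℝ 2 (u ∘ stretchSnd d) := hu.comp (stretchSnd d).contDiff
  rw [hu.continuous_h2Integrand.setIntegral_strip_eq_mul hd0, inv_mul_cancel_left₀ hd0.ne']
  exact setIntegral_mono_on (hv.continuous_h2Integrand.integrableOn_strip 1)
    ((hu.continuous_h2Integrand.comp (stretchSnd d).continuous).integrableOn_strip 1)
    (measurableSet_Ioo.prod measurableSet_Ioo)
    fun z _ => hu.h2Integrand_comp_le (norm_stretchSnd_le (abs_le.2 ⟨by linarith, hd1⟩)) z

/-- Scaling lemma of the appendix of the paper: the Sobolev embedding constant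
of `H²(Ω_d) ↪ L^r(Ω_d)` on the strip `Ω_d = (0,π) × (-d,d)` scales like
`d^{1-r/2}` with respect to the half-width `d ≤ 1`. -/
theorem stmt_10 (d : ℝ) (hd0 : 0 < d) (hd1 : d ≤ 1) (r : ℝ) (hr : 1 ≤ r)
    (C_r : ℝ) (hC : 0 < C_r)
    (h : ∀ v : ℝ × ℝ → ℝ, ContDiff ℝ 2 v →
      (∫ z in Set.Ioo (0:ℝ) π ×ˢ Set.Ioo (-1:ℝ) 1, |v z| ^ r)
        ≤ C_r * (∫ z in Set.Ioo (0:ℝ) π ×ˢ Set.Ioo (-1:ℝ) 1,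
            (|v z| ^ 2 + ‖fderiv ℝ v z‖ ^ 2 + ‖fderiv ℝ (fderiv ℝ v) z‖ ^ 2)) ^ (r / 2)) :
    ∀ u : ℝ × ℝ → ℝ, ContDiff ℝ 2 u →
      (∫ z in Set.Ioo (0:ℝ) π ×ˢ Set.Ioo (-d) d, |u z| ^ r)
        ≤ C_r * d ^ (1 - r / 2) * (∫ z in Set.Ioo (0:ℝ) π ×ˢ Set.Ioo (-d) d,
            (|u z| ^ 2 + ‖fderiv ℝ u z‖ ^ 2 + ‖fderiv ℝ (fderiv ℝ u) z‖ ^ 2)) ^ (r / 2) := by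
  intro u hu
  set v := u ∘ stretchSnd d
  set J := ∫ z in strip d, h2Integrand u z
  have hJ : 0 ≤ J := integral_h2Integrand_nonneg u _
  calc ∫ z in strip d, |u z| ^ r
      = d * ∫ z in strip 1, |v z| ^ r :=
        (hu.continuous.abs.rpow_const fun _ => Or.inr (by linarith)).setIntegral_strip_eq_mul hd0
    _ ≤ d * (C_r * (∫ z in strip 1, h2Integrand v z) ^ (r / 2)) := by
        gcongr; exact h v (hu.comp (stretchSnd d).contDiff)
    _ ≤ d * (C_r * (d⁻¹ * J) ^ (r / 2)) := by
        gcongr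
        · exact integral_h2Integrand_nonneg v _
        · exact hu.setIntegral_strip_h2Integrand_comp_stretchSnd_le hd0 hd1
    _ = C_r * d ^ (1 - r / 2) * J ^ (r / 2) := by
        rw [mul_rpow (inv_nonneg.2 hd0.le) hJ, inv_rpow hd0.le, ← rpow_neg hd0.le,
          sub_eq_add_neg, rpow_add hd0, rpow_one]
        ring
end
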